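/- arXiv:1709.03093 — 8 statements merged into one kernel-verified Lean document; each statement's English description precedes it below -/
import Mathlib

section
/- Let K ⊆ ℝ^d_+ be nonempty with ‖x‖ ≤ R for all x ∈ K, let α ≥ 1, R > 0, and let O : ℝ^d_+ → K satisfy O(c)·c ≤ α·inf_{x∈K} x·c for every c ∈ ℝ^d_+. Fix c ∈ ℝ^d and set s = O(c⁺) and v = O(c⁺) − αR·c̄⁻. Then: (1) v·c ≤ α·inf_{x∈K} x·c; (2) s ≤ v coordinatewise, and hence s·f ≤ v·f for every f ∈ ℝ^d_+; (3) ‖v‖ ≤ (α+2)R. -/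
open scoped RealInnerProductSpace

/-!
Write `c = c⁺ + c⁻` with `c⁺ ⊥ c⁻` and `u = c̄⁻`, so that `⟪u, c⟫ = ‖c⁻‖`. Then
`⟪v, c⟫ = ⟪O c⁺, c⁺⟫ + ⟪O c⁺, c⁻⟫ - αR‖c⁻‖`; the middle term is `≤ 0` because
`O c⁺ ∈ K ⊆ ℝ^d_+`, and `⟪x, c⁻⟫ ≥ -R‖c⁻‖` on `K` by Cauchy–Schwarz, so `-αR‖c⁻‖` pays for
the `c⁻`-part of `α ⨅ x, ⟪x, c⟫`. The other two claims hold because `u` has nonpositive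
coordinates and norm `≤ 1`.
-/

section InnerProductSpace

variable {E : Type*} [NormedAddCommGroup E] [InnerProductSpace ℝ E]

lemma neg_mul_norm_le_inner_of_norm_le {R : ℝ} {x : E} (hx : ‖x‖ ≤ R) (b : E) :
    -(R * ‖b‖) ≤ ⟪x, b⟫ := by
  have h := real_inner_le_norm x (-b)
  rw [inner_neg_right, norm_neg] at h
  nlinarith [norm_nonneg b]

lemma bddBelow_range_inner_of_norm_le {K : Set E} {R : ℝ} (hKR : ∀ x ∈ K, ‖x‖ ≤ R)
    (a : E) :
    BddBelow (Set.range fun x : K => ⟪(x : E), a⟫) :=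
  ⟨-(R * ‖a‖), by
    rintro _ ⟨x, rfl⟩
    exact neg_mul_norm_le_inner_of_norm_le (hKR x x.2) a⟩

lemma iInf_inner_sub_le_iInf_inner_add {K : Set E} (hK : K.Nonempty) {R : ℝ}
    (hKR : ∀ x ∈ K, ‖x‖ ≤ R) (a b : E) :
    (⨅ x : K, ⟪(x : E), a⟫) - R * ‖b‖ ≤ ⨅ x : K, ⟪(x : E), a + b⟫ := by
  have : Nonempty K := hK.to_subtype
  refine le_ciInf fun x => ?_
  rw [inner_add_right]
  have ha := ciInf_le (bddBelow_range_inner_of_norm_le hKR a) x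
  linarith [neg_mul_norm_le_inner_of_norm_le (hKR x x.2) b]

lemma inner_inv_norm_smul_add_of_inner_eq_zero {a b : E} (hab : ⟪b, a⟫ = 0) :
    ⟪‖b‖⁻¹ • b, a + b⟫ = ‖b‖ := by
  rw [real_inner_smul_left, inner_add_right, hab, zero_add, real_inner_self_eq_norm_sq]
  rcases eq_or_ne ‖b‖ 0 with h | h
  · simp [h]
  · field_simp

lemma norm_inv_norm_smul_le_one (b : E) : ‖‖b‖⁻¹ • b‖ ≤ 1 :=
  mem_closedBall_zero_iff.mp (inv_norm_smul_mem_unitClosedBall b)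

lemma inner_sub_smul_inv_norm_smul_le {K : Set E} (hK : K.Nonempty) {R α : ℝ}
    (hKR : ∀ x ∈ K, ‖x‖ ≤ R) (hα : 0 ≤ α) {a b s : E} (hab : ⟪b, a⟫ = 0)
    (hsa : ⟪s, a⟫ ≤ α * ⨅ x : K, ⟪(x : E), a⟫) (hsb : ⟪s, b⟫ ≤ 0) :
    ⟪s - (α * R) • (‖b‖⁻¹ • b), a + b⟫ ≤ α * ⨅ x : K, ⟪(x : E), a + b⟫ := by
  rw [inner_sub_left, real_inner_smul_left, inner_inv_norm_smul_add_of_inner_eq_zero hab,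
    inner_add_right]
  calc ⟪s, a⟫ + ⟪s, b⟫ - α * R * ‖b‖
      ≤ α * ((⨅ x : K, ⟪(x : E), a⟫) - R * ‖b‖) := by linarith
    _ ≤ α * ⨅ x : K, ⟪(x : E), a + b⟫ :=
        mul_le_mul_of_nonneg_left (iInf_inner_sub_le_iInf_inner_add hK hKR a b) hα

lemma norm_sub_smul_inv_norm_smul_le {s : E} {t : ℝ} (ht : 0 ≤ t) (b : E) :
    ‖s - t • (‖b‖⁻¹ • b)‖ ≤ ‖s‖ + t := by
  calc ‖s - t • (‖b‖⁻¹ • b)‖ ≤ ‖s‖ + t * ‖‖b‖⁻¹ • b‖ := by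
        rw [← norm_smul_of_nonneg ht]; exact norm_sub_le _ _
    _ ≤ ‖s‖ + t := by gcongr; exact mul_le_of_le_one_right ht (norm_inv_norm_smul_le_one b)

end InnerProductSpace

section EuclideanSpace

variable {ι : Type*}

lemma EuclideanSpace.eq_add_of_max_min {c cpos cneg : EuclideanSpace ℝ ι}
    (hcpos : ∀ i, cpos i = max (c i) 0) (hcneg : ∀ i, cneg i = min (c i) 0) :
    c = cpos + cneg := by
  ext i
  rw [PiLp.add_apply, hcpos, hcneg, max_add_min, add_zero]

variable [Fintype ι]

lemma EuclideanSpace.inner_eq_sum (x y : EuclideanSpace ℝ ι) :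
    ⟪x, y⟫ = ∑ i, x i * y i := by
  simp [PiLp.inner_apply, mul_comm]

lemma EuclideanSpace.inner_le_inner_of_le {x y f : EuclideanSpace ℝ ι} (hxy : ∀ i, x i ≤ y i)
    (hf : ∀ i, 0 ≤ f i) : ⟪x, f⟫ ≤ ⟪y, f⟫ := by
  simp only [EuclideanSpace.inner_eq_sum]
  exact Finset.sum_le_sum fun i _ => mul_le_mul_of_nonneg_right (hxy i) (hf i)

lemma EuclideanSpace.inner_nonpos_of_nonneg_of_nonpos {x y : EuclideanSpace ℝ ι}
    (hx : ∀ i, 0 ≤ x i) (hy : ∀ i, y i ≤ 0) : ⟪x, y⟫ ≤ 0 := by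
  rw [EuclideanSpace.inner_eq_sum]
  exact Finset.sum_nonpos fun i _ => mul_nonpos_of_nonneg_of_nonpos (hx i) (hy i)

lemma EuclideanSpace.inner_min_max_eq_zero {c cpos cneg : EuclideanSpace ℝ ι}
    (hcpos : ∀ i, cpos i = max (c i) 0) (hcneg : ∀ i, cneg i = min (c i) 0) :
    ⟪cneg, cpos⟫ = 0 := by
  rw [EuclideanSpace.inner_eq_sum]
  refine Finset.sum_eq_zero fun i _ => ?_
  rw [hcpos, hcneg]
  rcases le_total (c i) 0 with h | h <;> simp [h]

end EuclideanSpace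

theorem extended_approximation_oracle_min_general {d : ℕ}
    (K : Set (EuclideanSpace ℝ (Fin d))) (R α : ℝ)
    (hK : K.Nonempty) (hKpos : ∀ x ∈ K, ∀ i, 0 ≤ x i)
    (hKR : ∀ x ∈ K, ‖x‖ ≤ R) (hα : 1 ≤ α)
    (O : EuclideanSpace ℝ (Fin d) → EuclideanSpace ℝ (Fin d))
    (hOmem : ∀ c : EuclideanSpace ℝ (Fin d), (∀ i, 0 ≤ c i) → O c ∈ K)
    (hOapx : ∀ c : EuclideanSpace ℝ (Fin d), (∀ i, 0 ≤ c i) →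
      ⟪O c, c⟫ ≤ α * ⨅ x : K, ⟪(x : EuclideanSpace ℝ (Fin d)), c⟫)
    (c cpos cneg : EuclideanSpace ℝ (Fin d))
    (hcpos : ∀ i, cpos i = max (c i) 0)
    (hcneg : ∀ i, cneg i = min (c i) 0)
    (s v : EuclideanSpace ℝ (Fin d))
    (hs : s = O cpos)
    (hv : v = O cpos - (α * R) • (‖cneg‖⁻¹ • cneg)) :
    ⟪v, c⟫ ≤ α * ⨅ x : K, ⟪(x : EuclideanSpace ℝ (Fin d)), c⟫ ∧
    (∀ i, s i ≤ v i) ∧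
    (∀ f : EuclideanSpace ℝ (Fin d), (∀ i, 0 ≤ f i) → ⟪s, f⟫ ≤ ⟪v, f⟫) ∧
    ‖v‖ ≤ (α + 2) * R := by
  have hcpos_nonneg : ∀ i, 0 ≤ cpos i := fun i => hcpos i ▸ le_max_right _ _
  have hcneg_nonpos : ∀ i, cneg i ≤ 0 := fun i => hcneg i ▸ min_le_right _ _
  have hsK : O cpos ∈ K := hOmem cpos hcpos_nonneg
  have hR : 0 ≤ R := (norm_nonneg _).trans (hKR _ hsK)
  have hαR : 0 ≤ α * R := by positivity
  have hsv : ∀ i, s i ≤ v i := by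
    intro i
    have : 0 ≤ (α * R) * (‖cneg‖⁻¹ * -cneg i) :=
      mul_nonneg hαR (mul_nonneg (by positivity) (neg_nonneg.mpr (hcneg_nonpos i)))
    simp only [hv, hs, PiLp.sub_apply, PiLp.smul_apply, smul_eq_mul]
    linarith
  refine ⟨?_, hsv, fun f hf => EuclideanSpace.inner_le_inner_of_le hsv hf, ?_⟩
  · rw [hv, EuclideanSpace.eq_add_of_max_min hcpos hcneg]
    exact inner_sub_smul_inv_norm_smul_le hK hKR (by linarith)
      (EuclideanSpace.inner_min_max_eq_zero hcpos hcneg) (hOapx cpos hcpos_nonneg)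
      (EuclideanSpace.inner_nonpos_of_nonneg_of_nonpos (hKpos _ hsK) hcneg_nonpos)
  · calc ‖v‖ ≤ ‖O cpos‖ + α * R := hv ▸ norm_sub_smul_inv_norm_smul_le hαR cneg
      _ ≤ (α + 2) * R := by linarith [hKR _ hsK]

/-- The extended approximation oracle for loss minimization (α ≥ 1):
given an α-approximation oracle `O` for linear minimization over `K ⊆ ℝ^d_+`,
the point `v = O(c⁺) − αR·c̄⁻` satisfies the three stated properties. -/
theorem extended_approximation_oracle_min {d : ℕ}
    (K : Set (EuclideanSpace ℝ (Fin d))) (R α : ℝ)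
    (hK : K.Nonempty) (hKpos : ∀ x ∈ K, ∀ i, 0 ≤ x i)
    (hKR : ∀ x ∈ K, ‖x‖ ≤ R) (hα : 1 ≤ α) (hR : 0 < R)
    (O : EuclideanSpace ℝ (Fin d) → EuclideanSpace ℝ (Fin d))
    (hOmem : ∀ c : EuclideanSpace ℝ (Fin d), (∀ i, 0 ≤ c i) → O c ∈ K)
    (hOapx : ∀ c : EuclideanSpace ℝ (Fin d), (∀ i, 0 ≤ c i) →
      ⟪O c, c⟫ ≤ α * ⨅ x : K, ⟪(x : EuclideanSpace ℝ (Fin d)), c⟫)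
    (c cpos cneg : EuclideanSpace ℝ (Fin d))
    (hcpos : ∀ i, cpos i = max (c i) 0)
    (hcneg : ∀ i, cneg i = min (c i) 0)
    (s v : EuclideanSpace ℝ (Fin d))
    (hs : s = O cpos)
    (hv : v = O cpos - (α * R) • (‖cneg‖⁻¹ • cneg)) :
    ⟪v, c⟫ ≤ α * ⨅ x : K, ⟪(x : EuclideanSpace ℝ (Fin d)), c⟫ ∧
    (∀ i, s i ≤ v i) ∧
    (∀ f : EuclideanSpace ℝ (Fin d), (∀ i, 0 ≤ f i) → ⟪s, f⟫ ≤ ⟪v, f⟫) ∧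
    ‖v‖ ≤ (α + 2) * R :=
  extended_approximation_oracle_min_general K R α hK hKpos hKR hα O hOmem hOapx c cpos cneg hcpos
    hcneg s v hs hv
end

section
/- Let S ⊆ ℝ^d, η > 0, T ≥ 1, and let x_1, …, x_{T+1} ∈ ℝ^d and f_1, …, f_T ∈ ℝ^d be sequences such that for every t ∈ {1,…,T} and every z ∈ S: ‖z − x_{t+1}‖² ≤ ‖z − (x_t − η f_t)‖². Then for every x ∈ S: (1/T)·Σ_{t=1}^T x_t·f_t − (1/T)·Σ_{t=1}^T x·f_t ≤ ‖x_1 − x‖²/(2Tη) + (η/(2T))·Σ_{t=1}^T ‖f_t‖². -/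
open scoped RealInnerProductSpace

lemma telescope_Icc (g : ℕ → ℝ) (T : ℕ) :
    ∑ t ∈ Finset.Icc 1 T, (g t - g (t + 1)) = g 1 - g (T + 1) := by
  induction T with
  | zero => simp
  | succ n ih =>
    rcases Nat.eq_zero_or_pos n with h | h
    · subst h; simp
    · rw [Finset.sum_Icc_succ_top (by omega), ih]; ring

/-- Regret guarantee of online gradient descent without feasibility, for linear losses. -/
theorem ogd_without_feasibility_losses {d : ℕ}
    (S : Set (EuclideanSpace ℝ (Fin d))) (η : ℝ) (T : ℕ)
    (hη : 0 < η) (hT : 1 ≤ T)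
    (x f : ℕ → EuclideanSpace ℝ (Fin d))
    (hproj : ∀ t ∈ Finset.Icc 1 T, ∀ z ∈ S,
      ‖z - x (t + 1)‖ ^ 2 ≤ ‖z - (x t - η • f t)‖ ^ 2) :
    ∀ xs ∈ S,
      (1 / (T : ℝ)) * ∑ t ∈ Finset.Icc 1 T, ⟪x t, f t⟫ -
        (1 / (T : ℝ)) * ∑ t ∈ Finset.Icc 1 T, ⟪xs, f t⟫ ≤
      ‖x 1 - xs‖ ^ 2 / (2 * (T : ℝ) * η) +
        (η / (2 * (T : ℝ))) * ∑ t ∈ Finset.Icc 1 T, ‖f t‖ ^ 2 := by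
  intro xs hxs
  have hTpos : (0 : ℝ) < T := by exact_mod_cast hT
  set g : ℕ → ℝ := fun t => ‖xs - x t‖ ^ 2 with hg
  have key : ∀ t ∈ Finset.Icc 1 T,
      ⟪x t, f t⟫ - ⟪xs, f t⟫ ≤ (g t - g (t + 1)) / (2 * η) + η / 2 * ‖f t‖ ^ 2 := by
    intro t ht
    have h := hproj t ht xs hxs
    have hexp : ‖xs - (x t - η • f t)‖ ^ 2
        = g t + 2 * (η * ⟪xs - x t, f t⟫) + η ^ 2 * ‖f t‖ ^ 2 := by
      have : xs - (x t - η • f t) = (xs - x t) + η • f t := by abel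
      rw [this, norm_add_sq_real, real_inner_smul_right, norm_smul]
      simp only [hg, mul_pow, Real.norm_eq_abs]
      rw [abs_of_pos hη]
    have hsub : ⟪xs - x t, f t⟫ = ⟪xs, f t⟫ - ⟪x t, f t⟫ := by
      rw [inner_sub_left]
    have h2 : g (t + 1) ≤ g t + 2 * η * (⟪xs, f t⟫ - ⟪x t, f t⟫) + η ^ 2 * ‖f t‖ ^ 2 := by
      calc g (t + 1) ≤ ‖xs - (x t - η • f t)‖ ^ 2 := h
        _ = _ := by rw [hexp, hsub]; ring
    have h2η : (0 : ℝ) < 2 * η := by linarith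
    rw [div_add' _ _ _ (ne_of_gt h2η), le_div_iff₀ h2η]
    nlinarith
  have hsum := Finset.sum_le_sum key
  rw [Finset.sum_add_distrib, ← Finset.sum_div, telescope_Icc, ← Finset.mul_sum] at hsum
  have hg1 : g 1 = ‖x 1 - xs‖ ^ 2 := by rw [hg]; simp [norm_sub_rev]
  have hgnn : 0 ≤ g (T + 1) := by positivity
  have hstep : ∑ t ∈ Finset.Icc 1 T, ⟪x t, f t⟫ - ∑ t ∈ Finset.Icc 1 T, ⟪xs, f t⟫
      ≤ ‖x 1 - xs‖ ^ 2 / (2 * η) + η / 2 * ∑ t ∈ Finset.Icc 1 T, ‖f t‖ ^ 2 := by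
    rw [← Finset.sum_sub_distrib]
    calc _ ≤ (g 1 - g (T + 1)) / (2 * η) + η / 2 * ∑ t ∈ Finset.Icc 1 T, ‖f t‖ ^ 2 := hsum
      _ ≤ _ := by
        rw [hg1]
        have : (‖x 1 - xs‖ ^ 2 - g (T + 1)) / (2 * η) ≤ ‖x 1 - xs‖ ^ 2 / (2 * η) := by
          apply div_le_div_of_nonneg_right ?_ (by linarith) |>.trans_eq rfl
          · linarith
        linarith
  have h1T : (0:ℝ) < 1 / T := by positivity
  have := mul_le_mul_of_nonneg_left hstep (le_of_lt h1T)
  rw [mul_sub] at this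
  calc _ ≤ (1 / (T:ℝ)) * (‖x 1 - xs‖ ^ 2 / (2 * η) + η / 2 * ∑ t ∈ Finset.Icc 1 T, ‖f t‖ ^ 2) := this
    _ = _ := by field_simp
end

section
/- Let S ⊆ ℝ^d, η > 0, ε ≥ 0, T ≥ 1, and let x_1, …, x_{T+1} ∈ ℝ^d and f_1, …, f_T ∈ ℝ^d be sequences such that for every t ∈ {1,…,T} and every z ∈ S: ‖z − x_{t+1}‖² ≤ ‖z − (x_t − η f_t)‖² + 2ε. Then for every x ∈ S: (1/T)·Σ_{t=1}^T x_t·f_t − (1/T)·Σ_{t=1}^T x·f_t ≤ ‖x_1 − x‖²/(2Tη) + (η/(2T))·Σ_{t=1}^T ‖f_t‖² + ε/η. -/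
/-!
Expanding the square in the approximate-projection inequality at a comparator `z ∈ S` bounds
the instantaneous regret `⟪x t - z, f t⟫` by `(‖z - x t‖² - ‖z - x (t+1)‖²) / (2η) + η‖f t‖²/2 + ε/η`.
Summing over `t`, the distance terms telescope to at most `‖z - x 1‖² / (2η)`, and dividing by
`T` gives the averaged bound.
-/

open scoped RealInnerProductSpace
open Finset

def IsApproxInfeasibleProj {E : Type*} [NormedAddCommGroup E] (S : Set E) (ε : ℝ) (y x' : E) :
    Prop :=
  ∀ z ∈ S, ‖z - x'‖ ^ 2 ≤ ‖z - y‖ ^ 2 + 2 * ε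

section
variable {E : Type*} [NormedAddCommGroup E] [InnerProductSpace ℝ E]

theorem norm_sub_sub_smul_sq (z y g : E) (η : ℝ) :
    ‖z - (y - η • g)‖ ^ 2 = ‖z - y‖ ^ 2 - 2 * η * ⟪y - z, g⟫ + η ^ 2 * ‖g‖ ^ 2 := by
  rw [show z - (y - η • g) = (z - y) + η • g by abel, norm_add_sq_real, real_inner_smul_right,
    norm_smul, mul_pow, Real.norm_eq_abs, sq_abs, ← neg_sub y z, inner_neg_left]
  ring

theorem IsApproxInfeasibleProj.inner_sub_le {S : Set E} {ε η : ℝ} {y g x' z : E}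
    (h : IsApproxInfeasibleProj S ε (y - η • g) x') (hz : z ∈ S) (hη : 0 < η) :
    ⟪y - z, g⟫ ≤ (‖z - y‖ ^ 2 - ‖z - x'‖ ^ 2) / (2 * η) + η / 2 * ‖g‖ ^ 2 + ε / η := by
  have hproj := h z hz
  rw [norm_sub_sub_smul_sq] at hproj
  have hslack : (‖z - y‖ ^ 2 - ‖z - x'‖ ^ 2) / (2 * η) + η / 2 * ‖g‖ ^ 2 + ε / η - ⟪y - z, g⟫ =
      (‖z - y‖ ^ 2 - 2 * η * ⟪y - z, g⟫ + η ^ 2 * ‖g‖ ^ 2 + 2 * ε - ‖z - x'‖ ^ 2) / (2 * η) := by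
    field_simp
    ring
  have : 0 ≤ (‖z - y‖ ^ 2 - 2 * η * ⟪y - z, g⟫ + η ^ 2 * ‖g‖ ^ 2 + 2 * ε - ‖z - x'‖ ^ 2) /
      (2 * η) := div_nonneg (by linarith) (by linarith)
  linarith

theorem sum_inner_sub_le_of_isApproxInfeasibleProj {S : Set E} {ε η : ℝ} {T : ℕ}
    {x f : ℕ → E} {z : E} (hη : 0 < η) (hT : 1 ≤ T)
    (hproj : ∀ t ∈ Icc 1 T, IsApproxInfeasibleProj S ε (x t - η • f t) (x (t + 1)))
    (hz : z ∈ S) :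
    ∑ t ∈ Icc 1 T, ⟪x t - z, f t⟫ ≤
      ‖z - x 1‖ ^ 2 / (2 * η) + η / 2 * ∑ t ∈ Icc 1 T, ‖f t‖ ^ 2 + T * (ε / η) := by
  have htelescope : ∑ t ∈ Icc 1 T, (‖z - x t‖ ^ 2 - ‖z - x (t + 1)‖ ^ 2) =
      ‖z - x 1‖ ^ 2 - ‖z - x (T + 1)‖ ^ 2 := by
    rw [← neg_sub, ← sum_Icc_sub hT (fun t ↦ ‖z - x t‖ ^ 2), ← sum_neg_distrib]
    simp only [neg_sub]
  calc ∑ t ∈ Icc 1 T, ⟪x t - z, f t⟫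
      ≤ ∑ t ∈ Icc 1 T, ((‖z - x t‖ ^ 2 - ‖z - x (t + 1)‖ ^ 2) / (2 * η)
          + η / 2 * ‖f t‖ ^ 2 + ε / η) :=
        sum_le_sum fun t ht ↦ (hproj t ht).inner_sub_le hz hη
    _ = (‖z - x 1‖ ^ 2 - ‖z - x (T + 1)‖ ^ 2) / (2 * η)
          + η / 2 * ∑ t ∈ Icc 1 T, ‖f t‖ ^ 2 + T * (ε / η) := by
        rw [sum_add_distrib, sum_add_distrib, ← sum_div, htelescope, ← mul_sum, sum_const,
          Nat.card_Icc, nsmul_eq_mul, Nat.add_sub_cancel]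
    _ ≤ ‖z - x 1‖ ^ 2 / (2 * η) + η / 2 * ∑ t ∈ Icc 1 T, ‖f t‖ ^ 2 + T * (ε / η) := by
        gcongr
        exact sub_le_self _ (sq_nonneg _)

end

theorem ogd_approx_infeasible_projections_general {d : ℕ}
    (S : Set (EuclideanSpace ℝ (Fin d))) (η ε : ℝ) (T : ℕ)
    (hη : 0 < η) (hT : 1 ≤ T)
    (x f : ℕ → EuclideanSpace ℝ (Fin d))
    (hproj : ∀ t ∈ Finset.Icc 1 T, ∀ z ∈ S,
      ‖z - x (t + 1)‖ ^ 2 ≤ ‖z - (x t - η • f t)‖ ^ 2 + 2 * ε) :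
    ∀ xs ∈ S,
      (1 / (T : ℝ)) * ∑ t ∈ Finset.Icc 1 T, ⟪x t, f t⟫ -
        (1 / (T : ℝ)) * ∑ t ∈ Finset.Icc 1 T, ⟪xs, f t⟫ ≤
      ‖x 1 - xs‖ ^ 2 / (2 * (T : ℝ) * η) +
        (η / (2 * (T : ℝ))) * ∑ t ∈ Finset.Icc 1 T, ‖f t‖ ^ 2 + ε / η := by
  intro xs hxs
  have hTpos : (0 : ℝ) < T := by exact_mod_cast hT
  have hregret := sum_inner_sub_le_of_isApproxInfeasibleProj hη hT hproj hxs
  rw [← mul_sub, ← sum_sub_distrib]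
  simp_rw [← inner_sub_left]
  calc 1 / (T : ℝ) * ∑ t ∈ Icc 1 T, ⟪x t - xs, f t⟫
      ≤ 1 / (T : ℝ) * (‖xs - x 1‖ ^ 2 / (2 * η) + η / 2 * ∑ t ∈ Icc 1 T, ‖f t‖ ^ 2
          + T * (ε / η)) := by gcongr
    _ = _ := by
        rw [norm_sub_rev]
        field_simp

/-- Regret guarantee of online gradient descent with ε-approximated infeasible
projections (the KKL scheme), for linear losses. -/
theorem ogd_approx_infeasible_projections {d : ℕ}
    (S : Set (EuclideanSpace ℝ (Fin d))) (η ε : ℝ) (T : ℕ)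
    (hη : 0 < η) (hε : 0 ≤ ε) (hT : 1 ≤ T)
    (x f : ℕ → EuclideanSpace ℝ (Fin d))
    (hproj : ∀ t ∈ Finset.Icc 1 T, ∀ z ∈ S,
      ‖z - x (t + 1)‖ ^ 2 ≤ ‖z - (x t - η • f t)‖ ^ 2 + 2 * ε) :
    ∀ xs ∈ S,
      (1 / (T : ℝ)) * ∑ t ∈ Finset.Icc 1 T, ⟪x t, f t⟫ -
        (1 / (T : ℝ)) * ∑ t ∈ Finset.Icc 1 T, ⟪xs, f t⟫ ≤
      ‖x 1 - xs‖ ^ 2 / (2 * (T : ℝ) * η) +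
        (η / (2 * (T : ℝ))) * ∑ t ∈ Finset.Icc 1 T, ‖f t‖ ^ 2 + ε / η :=
  ogd_approx_infeasible_projections_general S η ε T hη hT x f hproj
end

section
/- Let S ⊆ ℝ^d, let x, y, v' ∈ ℝ^d and ε ≥ 0. Suppose v'·(x − y) ≤ z·(x − y) for all z ∈ S, and suppose (x − y)·(x − v') ≤ ε. Then for every z ∈ S: ‖z − x‖² ≤ ‖z − y‖² + 2ε. -/
open scoped RealInnerProductSpace

/-- If `v'` linearly minimizes the direction `x − y` over `S` and the Frank–Wolfe gap
`(x − y)·(x − v')` is at most `ε`, then `x` is an `ε`-approximated infeasible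
projection of `y` onto `S`. -/
theorem approx_projection_of_small_gap {d : ℕ}
    (S : Set (EuclideanSpace ℝ (Fin d))) (x y v' : EuclideanSpace ℝ (Fin d))
    (ε : ℝ) (hε : 0 ≤ ε)
    (horacle : ∀ z ∈ S, ⟪v', x - y⟫ ≤ ⟪z, x - y⟫)
    (hgap : ⟪x - y, x - v'⟫ ≤ ε) :
    ∀ z ∈ S, ‖z - x‖ ^ 2 ≤ ‖z - y‖ ^ 2 + 2 * ε := by
  intro z hz
  have h1 := horacle z hz
  have key : ⟪x - y, x - z⟫ ≤ ε := by
    have e1 : ⟪x - y, x - z⟫ = ⟪x - y, x - v'⟫ + (⟪v', x - y⟫ - ⟪z, x - y⟫) := by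
      simp only [inner_sub_left, inner_sub_right]
      linarith [real_inner_comm x v', real_inner_comm y v', real_inner_comm x z,
        real_inner_comm y z]
    linarith [e1]
  have e2 : ‖z - x‖ ^ 2 = ‖z - y‖ ^ 2 - 2 * ⟪z - y, x - y⟫ + ‖x - y‖ ^ 2 := by
    have : z - x = (z - y) - (x - y) := by abel
    rw [this, norm_sub_sq_real]
  have e3 : ⟪z - y, x - y⟫ = ‖x - y‖ ^ 2 - ⟪x - y, x - z⟫ := by
    rw [← real_inner_self_eq_norm_sq]
    simp only [inner_sub_left, inner_sub_right]
    linarith [real_inner_comm x z, real_inner_comm y z, real_inner_comm x y]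
  nlinarith [sq_nonneg ‖x - y‖]
end

section
/- Let M > 0, let x, y, v' ∈ ℝ^d with ‖x‖ ≤ M and ‖v'‖ ≤ M, and let ε satisfy 0 < ε ≤ 3M². Set λ = ε/(3M²) and x' = (1−λ)x + λv'. If (x − y)·(x − v') > ε, then λ ∈ (0,1] and ‖x' − y‖² ≤ ‖x − y‖² − 2ε²/(9M²). -/
open scoped RealInnerProductSpace

/-! A step of length `λ` from `x` towards `v'` changes `‖x - y‖²` by
`-2λ⟪x - y, x - v'⟫ + λ²‖x - v'‖²`. The gap bounds the first term by `-2λε` and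
`‖x - v'‖ ≤ 2M` bounds the second by `4λ²M²`; the choice `λ = ε/(3M²)` makes the sum
`-2ε²/(9M²)`. -/

theorem norm_sub_smul_sq_le {E : Type*} [NormedAddCommGroup E] [InnerProductSpace ℝ E]
    {u w : E} {g D t : ℝ} (ht : 0 ≤ t) (hg : g ≤ ⟪u, w⟫) (hw : ‖w‖ ≤ D) :
    ‖u - t • w‖ ^ 2 ≤ ‖u‖ ^ 2 - 2 * t * g + t ^ 2 * D ^ 2 := by
  rw [norm_sub_sq_real, real_inner_smul_right, norm_smul, Real.norm_of_nonneg ht, mul_pow]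
  have hw2 : ‖w‖ ^ 2 ≤ D ^ 2 := pow_le_pow_left₀ (norm_nonneg w) hw 2
  nlinarith [mul_le_mul_of_nonneg_left hg ht, mul_le_mul_of_nonneg_left hw2 (sq_nonneg t)]

/-- Per-step potential decrease of the Frank–Wolfe-style approximate projection
procedure: if the gap `(x − y)·(x − v')` exceeds `ε`, then the convex combination
`x' = (1−λ)x + λv'` with `λ = ε/(3M²)` decreases the squared distance to `y`
by at least `2ε²/(9M²)`. -/
theorem fw_step_potential_decrease {d : ℕ}
    (M : ℝ) (hM : 0 < M) (x y v' : EuclideanSpace ℝ (Fin d))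
    (hx : ‖x‖ ≤ M) (hv : ‖v'‖ ≤ M) (ε : ℝ) (hε : 0 < ε) (hεM : ε ≤ 3 * M ^ 2)
    (hgap : ε < ⟪x - y, x - v'⟫) :
    ε / (3 * M ^ 2) ∈ Set.Ioc (0 : ℝ) 1 ∧
    ‖((1 - ε / (3 * M ^ 2)) • x + (ε / (3 * M ^ 2)) • v') - y‖ ^ 2 ≤
      ‖x - y‖ ^ 2 - 2 * ε ^ 2 / (9 * M ^ 2) := by
  set t := ε / (3 * M ^ 2) with ht
  have hM2 : 0 < 3 * M ^ 2 := by positivity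
  have ht_pos : 0 < t := div_pos hε hM2
  refine ⟨⟨ht_pos, (div_le_one hM2).mpr hεM⟩, ?_⟩
  have hstep : (1 - t) • x + t • v' - y = (x - y) - t • (x - v') := by module
  have hdiam : ‖x - v'‖ ≤ 2 * M := (norm_sub_le x v').trans (by linarith)
  have hdecrease : -2 * t * ε + t ^ 2 * (2 * M) ^ 2 = -(2 * ε ^ 2 / (9 * M ^ 2)) := by
    rw [ht]; field_simp; ring
  rw [hstep]
  linarith [norm_sub_smul_sq_le ht_pos.le hgap.le hdiam]
end

section
/- Let S ⊆ ℝ^d be nonempty and compact, let y, w ∈ ℝ^d and ε > 0. Suppose ‖w‖ ≤ 1 and (y − z)·w ≥ ε for all z ∈ S. Then dist(y − εw, S)² ≤ dist(y, S)² − ε², where dist(u, S) = min_{z∈S} ‖z − u‖. -/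
open scoped RealInnerProductSpace

/-- Distance-decrease guarantee of each separating-hyperplane step of the
infeasible-projection algorithm: moving `y` by `−εw` along a unit-norm
separating direction `w` with margin `ε` decreases the squared distance to
the compact set `S` by at least `ε²`. -/
theorem separating_step_distance_decrease {d : ℕ}
    (S : Set (EuclideanSpace ℝ (Fin d))) (hS : S.Nonempty) (hSc : IsCompact S)
    (y w : EuclideanSpace ℝ (Fin d))
    (ε : ℝ) (hε : 0 < ε) (hw : ‖w‖ ≤ 1)
    (hsep : ∀ z ∈ S, ε ≤ ⟪y - z, w⟫) :
    (Metric.infDist (y - ε • w) S) ^ 2 ≤ (Metric.infDist y S) ^ 2 - ε ^ 2 := by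
  obtain ⟨z, hzS, hz⟩ := hSc.exists_infDist_eq_dist hS y
  have h1 : Metric.infDist (y - ε • w) S ≤ ‖(y - z) - ε • w‖ := by
    have := Metric.infDist_le_dist_of_mem (x := y - ε • w) hzS
    calc Metric.infDist (y - ε • w) S ≤ dist (y - ε • w) z := this
      _ = ‖(y - z) - ε • w‖ := by rw [dist_eq_norm, sub_right_comm]
  have hkey : ‖(y - z) - ε • w‖ ^ 2 ≤ ‖y - z‖ ^ 2 - ε ^ 2 := by
    have hexp : ‖(y - z) - ε • w‖ ^ 2
        = ‖y - z‖ ^ 2 - 2 * ε * ⟪y - z, w⟫ + ε ^ 2 * ‖w‖ ^ 2 := by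
      rw [norm_sub_sq_real, real_inner_smul_right, norm_smul]
      simp [abs_of_pos hε]
      ring
    have hip := hsep z hzS
    have hw2 : ε ^ 2 * ‖w‖ ^ 2 ≤ ε ^ 2 := by
      have : ‖w‖ ^ 2 ≤ 1 := by
        nlinarith [norm_nonneg w]
      nlinarith [sq_nonneg ε]
    nlinarith
  have h0 : 0 ≤ Metric.infDist (y - ε • w) S := Metric.infDist_nonneg
  have h2 : Metric.infDist (y - ε • w) S ^ 2 ≤ ‖(y - z) - ε • w‖ ^ 2 := by
    nlinarith [norm_nonneg ((y - z) - ε • w)]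
  have h3 : Metric.infDist y S = ‖y - z‖ := by
    rw [hz, dist_eq_norm]
  rw [h3]
  linarith
end

section
/- Let K ⊆ ℝ^d_+ be nonempty and compact with ‖x‖ ≤ R for all x ∈ K, let α ≥ 1, R > 0, F > 0, η > 0, ε > 0 and T ≥ 1. Let f_1, …, f_T ∈ ℝ^d_+ with ‖f_t‖ ≤ F for all t. Let ỹ_1, …, ỹ_T ∈ ℝ^d, p_1, …, p_T ∈ ℝ^d and s̄_1, …, s̄_T ∈ conv(K) be sequences such that: ỹ_1 = α s_1 for some s_1 ∈ K, p_1 = ỹ_1, s̄_1 = s_1; for every t ∈ {1,…,T−1} and every z ∈ conv(αK): ‖z − ỹ_{t+1}‖² ≤ ‖z − (ỹ_t − η f_t)‖²; for every t ∈ {2,…,T}: ‖p_t − ỹ_t‖ ≤ 3ε; and for every t ∈ {1,…,T} and every f ∈ ℝ^d_+: s̄_t·f ≤ p_t·f. Then (1/T)·Σ_{t=1}^T s̄_t·f_t − α·min_{x∈K} (1/T)·Σ_{t=1}^T x·f_t ≤ α²R²/(Tη) + ηF²/2 + 3Fε. -/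
/-!
Compare with `z = α • x`, where `x` minimises the average loss over `K`. Since `z ∈ conv(αK)`,
each infeasible projection brings the iterate no further from `z` than the gradient step did, so
the potential `‖z - ỹ_t‖²` telescopes and `∑ ⟪ỹ_t - z, f_t⟫ ≤ ‖z - ỹ_1‖² / (2η) + TηF²/2`.
Domination by `p_t` and `‖p_t - ỹ_t‖ ≤ 3ε` pass this bound on to `s̄_t` at a cost of `3εF`
per round. Finally `‖z - ỹ_1‖² = α²‖x - s₁‖² ≤ 2α²R²`, because `K` lies in the nonnegative
orthant and so `⟪x, s₁⟫ ≥ 0`.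
-/

open scoped RealInnerProductSpace Pointwise
open Finset

section OnlineGradientDescent

variable {E : Type*} [NormedAddCommGroup E] [InnerProductSpace ℝ E]

theorem inner_sub_le_of_norm_sub_sq_le {η : ℝ} (hη : 0 < η) {y y' z g : E}
    (h : ‖z - y'‖ ^ 2 ≤ ‖z - (y - η • g)‖ ^ 2) :
    ⟪y - z, g⟫ ≤ (‖z - y‖ ^ 2 - ‖z - y'‖ ^ 2) / (2 * η) + η * ‖g‖ ^ 2 / 2 := by
  have hexpand : ‖z - (y - η • g)‖ ^ 2 =
      ‖z - y‖ ^ 2 - 2 * η * ⟪y - z, g⟫ + η ^ 2 * ‖g‖ ^ 2 := by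
    rw [show z - (y - η • g) = (z - y) + η • g by abel, norm_add_sq_real, real_inner_smul_right,
      norm_smul, Real.norm_eq_abs, abs_of_pos hη, ← neg_sub y z, inner_neg_left]
    ring
  rw [div_add' _ _ _ (by positivity), le_div_iff₀ (by positivity)]
  nlinarith

theorem sum_inner_sub_le_of_norm_sub_sq_le {η G : ℝ} (hη : 0 < η) {T : ℕ} (hT : 1 ≤ T)
    {y g : ℕ → E} {z : E}
    (hproj : ∀ t ∈ Ico 1 T, ‖z - y (t + 1)‖ ^ 2 ≤ ‖z - (y t - η • g t)‖ ^ 2)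
    (hg : ∀ t ∈ Icc 1 T, ‖g t‖ ≤ G) :
    ∑ t ∈ Icc 1 T, ⟪y t - z, g t⟫ ≤ ‖z - y 1‖ ^ 2 / (2 * η) + T * (η * G ^ 2 / 2) := by
  -- After the last round, pretend to project onto `z` itself: the potential then vanishes.
  set y' := Function.update y (T + 1) z
  have hy' : ∀ t ≤ T, y' t = y t := fun t ht => Function.update_of_ne (by omega) _ _
  have hstep : ∀ t ∈ Icc 1 T, ⟪y t - z, g t⟫ ≤
      (‖z - y' t‖ ^ 2 - ‖z - y' (t + 1)‖ ^ 2) / (2 * η) + η * G ^ 2 / 2 := by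
    intro t ht
    rw [mem_Icc] at ht
    have hproj' : ‖z - y' (t + 1)‖ ^ 2 ≤ ‖z - (y t - η • g t)‖ ^ 2 := by
      rcases ht.2.lt_or_eq with hlt | rfl
      · rw [hy' _ hlt]
        exact hproj t (mem_Ico.mpr ⟨ht.1, hlt⟩)
      · simp [y']
    have hg2 : ‖g t‖ ^ 2 ≤ G ^ 2 := pow_le_pow_left₀ (norm_nonneg _) (hg t (mem_Icc.mpr ht)) 2
    rw [hy' t ht.2]
    linarith [inner_sub_le_of_norm_sub_sq_le hη hproj', mul_le_mul_of_nonneg_left hg2 hη.le]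
  calc ∑ t ∈ Icc 1 T, ⟪y t - z, g t⟫
      ≤ ∑ t ∈ Icc 1 T, ((‖z - y' t‖ ^ 2 - ‖z - y' (t + 1)‖ ^ 2) / (2 * η) + η * G ^ 2 / 2) :=
        sum_le_sum hstep
    _ = ‖z - y 1‖ ^ 2 / (2 * η) + T * (η * G ^ 2 / 2) := by
        have htel := sum_Icc_sub hT fun t => -‖z - y' t‖ ^ 2
        simp only [neg_sub_neg] at htel
        rw [sum_add_distrib, ← sum_div, htel, sum_const, Nat.card_Icc, Nat.add_sub_cancel,
          nsmul_eq_mul, hy' 1 hT]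
        simp [y']

theorem inner_le_inner_add_of_norm_sub_le {p y g : E} {δ G : ℝ} (hpy : ‖p - y‖ ≤ δ)
    (hg : ‖g‖ ≤ G) : ⟪p, g⟫ ≤ ⟪y, g⟫ + δ * G := by
  have hδ : 0 ≤ δ := (norm_nonneg _).trans hpy
  calc ⟪p, g⟫ = ⟪y, g⟫ + ⟪p - y, g⟫ := by rw [inner_sub_left]; abel
    _ ≤ ⟪y, g⟫ + ‖p - y‖ * ‖g‖ := by gcongr; exact real_inner_le_norm _ _
    _ ≤ ⟪y, g⟫ + δ * G := by gcongr

theorem sum_inner_sub_le_of_dominated {η G δ : ℝ} (hη : 0 < η) {T : ℕ} (hT : 1 ≤ T)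
    {y p s g : ℕ → E} {z : E}
    (hproj : ∀ t ∈ Ico 1 T, ‖z - y (t + 1)‖ ^ 2 ≤ ‖z - (y t - η • g t)‖ ^ 2)
    (hg : ∀ t ∈ Icc 1 T, ‖g t‖ ≤ G) (hclose : ∀ t ∈ Icc 1 T, ‖p t - y t‖ ≤ δ)
    (hdom : ∀ t ∈ Icc 1 T, ⟪s t, g t⟫ ≤ ⟪p t, g t⟫) :
    ∑ t ∈ Icc 1 T, (⟪s t, g t⟫ - ⟪z, g t⟫) ≤
      ‖z - y 1‖ ^ 2 / (2 * η) + T * (η * G ^ 2 / 2) + T * (δ * G) := by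
  have hstep : ∀ t ∈ Icc 1 T, ⟪s t, g t⟫ - ⟪z, g t⟫ ≤ ⟪y t - z, g t⟫ + δ * G := fun t ht => by
    rw [inner_sub_left]
    linarith [hdom t ht, inner_le_inner_add_of_norm_sub_le (hclose t ht) (hg t ht)]
  calc _ ≤ ∑ t ∈ Icc 1 T, (⟪y t - z, g t⟫ + δ * G) := sum_le_sum hstep
    _ ≤ _ := by
      rw [sum_add_distrib, sum_const, Nat.card_Icc, Nat.add_sub_cancel, nsmul_eq_mul]
      linarith [sum_inner_sub_le_of_norm_sub_sq_le hη hT hproj hg]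

theorem norm_sub_sq_le_two_mul_sq_of_inner_nonneg {x y : E} {R : ℝ} (hxy : 0 ≤ ⟪x, y⟫)
    (hx : ‖x‖ ≤ R) (hy : ‖y‖ ≤ R) : ‖x - y‖ ^ 2 ≤ 2 * R ^ 2 := by
  have hx2 : ‖x‖ ^ 2 ≤ R ^ 2 := pow_le_pow_left₀ (norm_nonneg _) hx 2
  have hy2 : ‖y‖ ^ 2 ≤ R ^ 2 := pow_le_pow_left₀ (norm_nonneg _) hy 2
  rw [norm_sub_sq_real]
  linarith

end OnlineGradientDescent

theorem EuclideanSpace.inner_nonneg_of_nonneg {ι : Type*} [Fintype ι]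
    {x y : EuclideanSpace ℝ ι} (hx : ∀ i, 0 ≤ x i) (hy : ∀ i, 0 ≤ y i) : 0 ≤ ⟪x, y⟫ := by
  rw [PiLp.inner_apply]
  exact sum_nonneg fun i _ => mul_nonneg (hy i) (hx i)

theorem ogd_infeasible_projection_alpha_regret_general {d : ℕ}
    (K : Set (EuclideanSpace ℝ (Fin d))) (R α F η ε : ℝ) (T : ℕ)
    (hK : K.Nonempty) (hKc : IsCompact K)
    (hKpos : ∀ x ∈ K, ∀ i, 0 ≤ x i) (hKR : ∀ x ∈ K, ‖x‖ ≤ R)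
    (hη : 0 < η) (hε : 0 < ε) (hT : 1 ≤ T)
    (f : ℕ → EuclideanSpace ℝ (Fin d))
    (hfpos : ∀ t ∈ Finset.Icc 1 T, ∀ i, 0 ≤ f t i)
    (hfF : ∀ t ∈ Finset.Icc 1 T, ‖f t‖ ≤ F)
    (ytil p sbar : ℕ → EuclideanSpace ℝ (Fin d))
    (s₁ : EuclideanSpace ℝ (Fin d)) (hs₁ : s₁ ∈ K)
    (hy1 : ytil 1 = α • s₁) (hp1 : p 1 = ytil 1)
    (hproj : ∀ t ∈ Finset.Icc 1 (T - 1), ∀ z ∈ convexHull ℝ (α • K),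
      ‖z - ytil (t + 1)‖ ^ 2 ≤ ‖z - (ytil t - η • f t)‖ ^ 2)
    (hclose : ∀ t ∈ Finset.Icc 2 T, ‖p t - ytil t‖ ≤ 3 * ε)
    (hdom : ∀ t ∈ Finset.Icc 1 T, ∀ g : EuclideanSpace ℝ (Fin d),
      (∀ i, 0 ≤ g i) → ⟪sbar t, g⟫ ≤ ⟪p t, g⟫) :
    (1 / (T : ℝ)) * ∑ t ∈ Finset.Icc 1 T, ⟪sbar t, f t⟫ -
      α * ⨅ x : K, (1 / (T : ℝ)) * ∑ t ∈ Finset.Icc 1 T,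
        ⟪(x : EuclideanSpace ℝ (Fin d)), f t⟫ ≤
    α ^ 2 * R ^ 2 / ((T : ℝ) * η) + η * F ^ 2 / 2 + 3 * F * ε := by
  obtain ⟨x, hxK, hxmin⟩ := hKc.exists_isMinOn hK (Continuous.continuousOn (by fun_prop) :
    ContinuousOn (fun x => (1 / (T : ℝ)) * ∑ t ∈ Icc 1 T, ⟪x, f t⟫) K)
  rw [hxmin.iInf_eq hxK]
  have hz : α • x ∈ convexHull ℝ (α • K) := subset_convexHull ℝ _ (Set.smul_mem_smul_set hxK)
  have hclose' : ∀ t ∈ Icc 1 T, ‖p t - ytil t‖ ≤ 3 * ε := by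
    intro t ht
    rcases eq_or_ne t 1 with rfl | ht1
    · rw [hp1, sub_self, norm_zero]; positivity
    · exact hclose t (by simp only [mem_Icc] at ht ⊢; omega)
  have hregret := sum_inner_sub_le_of_dominated hη hT
    (fun t ht => hproj t (by simp only [mem_Ico, mem_Icc] at ht ⊢; omega) _ hz) hfF hclose'
    fun t ht => hdom t ht (f t) (hfpos t ht)
  have hstart : ‖α • x - ytil 1‖ ^ 2 / (2 * η) ≤ α ^ 2 * R ^ 2 / η := by
    rw [hy1, ← smul_sub, norm_smul, mul_pow, Real.norm_eq_abs, sq_abs,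
      div_le_div_iff₀ (by positivity) hη]
    have hxs := norm_sub_sq_le_two_mul_sq_of_inner_nonneg
      (EuclideanSpace.inner_nonneg_of_nonneg (hKpos x hxK) (hKpos s₁ hs₁)) (hKR x hxK) (hKR s₁ hs₁)
    nlinarith [mul_le_mul_of_nonneg_left hxs (mul_nonneg (sq_nonneg α) hη.le)]
  simp only [sum_sub_distrib, real_inner_smul_left, ← mul_sum] at hregret
  have hT0 : (0 : ℝ) < T := by exact_mod_cast hT
  calc _ = (∑ t ∈ Icc 1 T, ⟪sbar t, f t⟫ - α * ∑ t ∈ Icc 1 T, ⟪x, f t⟫) / T := by ring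
    _ ≤ (α ^ 2 * R ^ 2 / η + T * (η * F ^ 2 / 2) + T * (3 * ε * F)) / T := by gcongr; linarith
    _ = _ := by field_simp

/-- Deterministic core of the regret guarantee of online gradient descent with
infeasible projections onto `conv(αK)` (full-information setting, losses,
`α ≥ 1`): the α-regret of the dominating sequence `s̄` is bounded by
`α²R²/(Tη) + ηF²/2 + 3Fε`. -/
theorem ogd_infeasible_projection_alpha_regret {d : ℕ}
    (K : Set (EuclideanSpace ℝ (Fin d))) (R α F η ε : ℝ) (T : ℕ)
    (hK : K.Nonempty) (hKc : IsCompact K)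
    (hKpos : ∀ x ∈ K, ∀ i, 0 ≤ x i) (hKR : ∀ x ∈ K, ‖x‖ ≤ R)
    (hα : 1 ≤ α) (hR : 0 < R) (hF : 0 < F) (hη : 0 < η) (hε : 0 < ε) (hT : 1 ≤ T)
    (f : ℕ → EuclideanSpace ℝ (Fin d))
    (hfpos : ∀ t ∈ Finset.Icc 1 T, ∀ i, 0 ≤ f t i)
    (hfF : ∀ t ∈ Finset.Icc 1 T, ‖f t‖ ≤ F)
    (ytil p sbar : ℕ → EuclideanSpace ℝ (Fin d))
    (s₁ : EuclideanSpace ℝ (Fin d)) (hs₁ : s₁ ∈ K)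
    (hy1 : ytil 1 = α • s₁) (hp1 : p 1 = ytil 1) (hsbar1 : sbar 1 = s₁)
    (hsbarK : ∀ t ∈ Finset.Icc 1 T, sbar t ∈ convexHull ℝ K)
    (hproj : ∀ t ∈ Finset.Icc 1 (T - 1), ∀ z ∈ convexHull ℝ (α • K),
      ‖z - ytil (t + 1)‖ ^ 2 ≤ ‖z - (ytil t - η • f t)‖ ^ 2)
    (hclose : ∀ t ∈ Finset.Icc 2 T, ‖p t - ytil t‖ ≤ 3 * ε)
    (hdom : ∀ t ∈ Finset.Icc 1 T, ∀ g : EuclideanSpace ℝ (Fin d),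
      (∀ i, 0 ≤ g i) → ⟪sbar t, g⟫ ≤ ⟪p t, g⟫) :
    (1 / (T : ℝ)) * ∑ t ∈ Finset.Icc 1 T, ⟪sbar t, f t⟫ -
      α * ⨅ x : K, (1 / (T : ℝ)) * ∑ t ∈ Finset.Icc 1 T,
        ⟪(x : EuclideanSpace ℝ (Fin d)), f t⟫ ≤
    α ^ 2 * R ^ 2 / ((T : ℝ) * η) + η * F ^ 2 / 2 + 3 * F * ε :=
  ogd_infeasible_projection_alpha_regret_general K R α F η ε T hK hKc hKpos hKR hη hε hT f hfpos hfF
    ytil p sbar s₁ hs₁ hy1 hp1 hproj hclose hdom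
end

section
/- Let α, R ≥ 0, F̂ ≥ 0, η ≥ 0, ε > 0 and T ≥ 2. Let D_1, …, D_T be nonnegative reals, k_1, …, k_{T−1} nonnegative integers, and I_1, …, I_{T−1} ∈ {0,1}, such that D_1 = 0, D_t ≤ √2·αR for all t ∈ {1,…,T}, and D_{t+1}² ≤ (D_t + I_t·ηF̂)² − (k_t − 1)ε² for all t ∈ {1,…,T−1}. Then Σ_{t=1}^{T−1} k_t ≤ (T−1) + (2√2·ηαRF̂ + η²F̂²)·(Σ_{t=1}^{T−1} I_t)/ε². -/
private lemma tel_aux (f : ℕ → ℝ) : ∀ n, ∑ t ∈ Finset.Icc 1 n, (f t - f (t+1)) = f 1 - f (n+1) := by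
  intro n
  induction n with
  | zero => simp
  | succ n ih =>
    rw [Finset.sum_Icc_succ_top (by omega : 1 ≤ n + 1), ih]
    ring


/-- Oracle-complexity bound underlying the bandit algorithm: if the distances
`D t` of the iterates from `conv(αK)` satisfy the per-round recursion
`D(t+1)² ≤ (D t + Iₜ·ηF̂)² − (k t − 1)ε²` with exploration indicators
`Iₜ ∈ {0,1}`, start at `D 1 = 0` and remain bounded by `√2·αR`, then the
total number of projection iterations is at most
`(T−1) + (2√2·ηαRF̂ + η²F̂²)·(Σ Iₜ)/ε²`. -/
theorem bandit_oracle_complexity (α R Fhat η ε : ℝ) (T : ℕ)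
    (hα : 0 ≤ α) (hR : 0 ≤ R) (hFhat : 0 ≤ Fhat) (hη : 0 ≤ η) (hε : 0 < ε)
    (hT : 2 ≤ T)
    (D : ℕ → ℝ) (k : ℕ → ℕ) (I : ℕ → ℕ)
    (hDnonneg : ∀ t ∈ Finset.Icc 1 T, 0 ≤ D t)
    (hD1 : D 1 = 0)
    (hDbound : ∀ t ∈ Finset.Icc 1 T, D t ≤ Real.sqrt 2 * α * R)
    (hI : ∀ t ∈ Finset.Icc 1 (T - 1), I t = 0 ∨ I t = 1)
    (hrec : ∀ t ∈ Finset.Icc 1 (T - 1),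
      (D (t + 1)) ^ 2 ≤ (D t + (I t : ℝ) * η * Fhat) ^ 2 - ((k t : ℝ) - 1) * ε ^ 2) :
    (∑ t ∈ Finset.Icc 1 (T - 1), (k t : ℝ)) ≤
      ((T : ℝ) - 1) + (2 * Real.sqrt 2 * η * α * R * Fhat + η ^ 2 * Fhat ^ 2) *
        (∑ t ∈ Finset.Icc 1 (T - 1), (I t : ℝ)) / ε ^ 2 := by
  set C : ℝ := 2 * Real.sqrt 2 * η * α * R * Fhat + η ^ 2 * Fhat ^ 2 with hC
  have hε2 : (0:ℝ) < ε ^ 2 := pow_pos hε 2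
  have hS : 0 ≤ Real.sqrt 2 * α * R := by positivity
  -- pointwise bound
  have key : ∀ t ∈ Finset.Icc 1 (T - 1),
      (k t : ℝ) * ε ^ 2 ≤ ε ^ 2 + ((D t) ^ 2 - (D (t + 1)) ^ 2) + C * (I t : ℝ) := by
    intro t ht
    have ht' := Finset.mem_Icc.mp ht
    have htT : t ∈ Finset.Icc 1 T := Finset.mem_Icc.mpr ⟨ht'.1, le_trans ht'.2 (Nat.sub_le _ _)⟩
    have ht1T : t + 1 ∈ Finset.Icc 1 T := Finset.mem_Icc.mpr
      ⟨Nat.le_add_right 1 t |>.trans (by omega), by omega⟩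
    have hDt := hDbound t htT
    have hDt0 := hDnonneg t htT
    have hr := hrec t ht
    rcases hI t ht with h0 | h1
    · rw [h0] at hr ⊢
      push_cast at hr ⊢
      nlinarith
    · rw [h1] at hr ⊢
      push_cast at hr ⊢
      have h2 : 2 * D t * (η * Fhat) ≤ 2 * (Real.sqrt 2 * α * R) * (η * Fhat) := by
        have := mul_nonneg hη hFhat
        nlinarith
      nlinarith
  have sum_key : (∑ t ∈ Finset.Icc 1 (T - 1), (k t : ℝ)) * ε ^ 2 ≤
      ((T : ℝ) - 1) * ε ^ 2 + ((D 1) ^ 2 - (D T) ^ 2)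
        + C * (∑ t ∈ Finset.Icc 1 (T - 1), (I t : ℝ)) := by
    have h1 : (∑ t ∈ Finset.Icc 1 (T - 1), (k t : ℝ)) * ε ^ 2
        = ∑ t ∈ Finset.Icc 1 (T - 1), (k t : ℝ) * ε ^ 2 := by rw [Finset.sum_mul]
    have h2 : ∑ t ∈ Finset.Icc 1 (T - 1), (ε ^ 2 + ((D t) ^ 2 - (D (t + 1)) ^ 2) + C * (I t : ℝ))
        = ((T : ℝ) - 1) * ε ^ 2 + ((D 1) ^ 2 - (D T) ^ 2)
          + C * (∑ t ∈ Finset.Icc 1 (T - 1), (I t : ℝ)) := by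
      rw [Finset.sum_add_distrib, Finset.sum_add_distrib, Finset.sum_const, ← Finset.mul_sum]
      have hcard : (Finset.Icc 1 (T - 1)).card = T - 1 := by rw [Nat.card_Icc]; omega
      have htel : ∑ t ∈ Finset.Icc 1 (T - 1), ((D t) ^ 2 - (D (t + 1)) ^ 2)
          = (D 1) ^ 2 - (D T) ^ 2 := by
        rw [tel_aux (fun t => (D t) ^ 2) (T - 1), show T - 1 + 1 = T by omega]
      rw [htel, hcard]
      have hc : ((T - 1 : ℕ) : ℝ) = (T : ℝ) - 1 := by
        push_cast [Nat.cast_sub (show 1 ≤ T by omega)]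
        ring
      rw [nsmul_eq_mul, hc]
      try ring
    rw [h1, ← h2]
    exact Finset.sum_le_sum key
  have hDT0 : 0 ≤ D T := hDnonneg T (Finset.mem_Icc.mpr ⟨by omega, le_refl _⟩)
  have hfin : (∑ t ∈ Finset.Icc 1 (T - 1), (k t : ℝ)) * ε ^ 2 ≤
      ((T : ℝ) - 1) * ε ^ 2 + C * (∑ t ∈ Finset.Icc 1 (T - 1), (I t : ℝ)) := by
    rw [hD1] at sum_key
    nlinarith
  rw [← sub_nonneg]
  have : ((T : ℝ) - 1) + C * (∑ t ∈ Finset.Icc 1 (T - 1), (I t : ℝ)) / ε ^ 2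
      - (∑ t ∈ Finset.Icc 1 (T - 1), (k t : ℝ))
      = (((T : ℝ) - 1) * ε ^ 2 + C * (∑ t ∈ Finset.Icc 1 (T - 1), (I t : ℝ))
        - (∑ t ∈ Finset.Icc 1 (T - 1), (k t : ℝ)) * ε ^ 2) / ε ^ 2 := by
    field_simp
  rw [this]
  apply div_nonneg _ hε2.le
  linarith
end
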